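/- arXiv:math/0411586 — 8 statements merged into one kernel-verified Lean document; each statement's English description precedes it below -/
import Mathlib

section
/- In a left diring R with left multiplicative bar-unit e_ℓ, the definition of the additive halo ℏ⁺(R) does not depend on the choice of left bar-unit: if e and e' are both left bar-units of R, then {x : e ⇀· x = 0} = {x : e' ⇀· x = 0}. -/
universe u v

/-- A left diring: an additive abelian group with a dimonoid structure
(left product `ldL` = ⇀·, right product `ldR` = ↼·) having a left bar-unit `ldE`,
with both products distributing over addition on both sides. -/
class LeftDiring (R : Type u) extends AddCommGroup R where
  ldL : R → R → R
  ldR : R → R → R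
  ldE : R
  ax1 : ∀ x y z : R, ldL x (ldL y z) = ldL (ldL x y) z
  ax2 : ∀ x y z : R, ldL (ldL x y) z = ldL x (ldR y z)
  ax3 : ∀ x y z : R, ldL (ldR x y) z = ldR x (ldL y z)
  ax4 : ∀ x y z : R, ldR (ldL x y) z = ldR x (ldR y z)
  ax5 : ∀ x y z : R, ldR x (ldR y z) = ldR (ldR x y) z
  ax6 : ∀ x : R, ldR ldE x = x
  dist1 : ∀ x y z : R, ldL x (y + z) = ldL x y + ldL x z
  dist2 : ∀ x y z : R, ldL (x + y) z = ldL x z + ldL y z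
  dist3 : ∀ x y z : R, ldR x (y + z) = ldR x y + ldR x z
  dist4 : ∀ x y z : R, ldR (x + y) z = ldR x z + ldR y z

open LeftDiring

lemma ldL_zero {R : Type u} [LeftDiring R] (a : R) : ldL a (0 : R) = 0 := by
  have h := dist1 a (0 : R) 0
  rw [add_zero] at h
  exact (add_eq_left.mp h.symm)

lemma key {R : Type u} [LeftDiring R] (e e' x : R)
    (he : ∀ x : R, ldR e x = x) (hx : ldL e x = 0) : ldL e' x = 0 := by
  have : ldL e' x = ldL e' (ldL e x) := by
    rw [ax1, ax2, he]
  rw [this, hx, ldL_zero]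

/-- The additive halo does not depend on the choice of left bar-unit. -/
theorem stmt1 {R : Type u} [LeftDiring R] (e e' : R)
    (he : ∀ x : R, ldR e x = x) (he' : ∀ x : R, ldR e' x = x) :
    {x : R | ldL e x = 0} = {x : R | ldL e' x = 0} := by
  ext x
  exact ⟨fun h => key e e' x he h, fun h => key e' e x he' h⟩
end

section
/- In a left diring R with left multiplicative bar-unit e_ℓ, the additive halo ℏ⁺(R) is an ideal: it is a subgroup of (R,+) and for ∗ ∈ {⇀·, ↼·}, ℏ⁺(R) ∗ R ⊆ ℏ⁺(R) and R ∗ ℏ⁺(R) ⊆ ℏ⁺(R). -/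
universe u v

open LeftDiring

lemma ldL_zero_right {R : Type u} [LeftDiring R] (x : R) : ldL x (0 : R) = 0 := by
  have h := dist1 x (0 : R) 0
  simpa using h

lemma ldL_zero_left {R : Type u} [LeftDiring R] (x : R) : ldL (0 : R) x = 0 := by
  have h := dist2 (0 : R) 0 x
  simpa using h

/-- If `e ⇀ a = 0` then `y ⇀ a = 0` for all `y`. -/
lemma ldL_halo {R : Type u} [LeftDiring R] {a : R} (ha : ldL ldE a = 0) (y : R) :
    ldL y a = 0 := by
  calc ldL y a = ldL y (ldR ldE a) := by rw [ax6]
    _ = ldL (ldL y ldE) a := (ax2 y ldE a).symm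
    _ = ldL y (ldL ldE a) := (ax1 y ldE a).symm
    _ = 0 := by rw [ha, ldL_zero_right]

/-- The additive halo `ℏ⁺(R)` is an ideal of `R`: an additive subgroup closed under
multiplication by `R` on both sides for both products. -/
theorem stmt4 {R : Type u} [LeftDiring R] :
    ∃ H : AddSubgroup R, (H : Set R) = {x : R | ldL ldE x = 0} ∧
      ∀ a ∈ H, ∀ x : R,
        ldL a x ∈ H ∧ ldR a x ∈ H ∧ ldL x a ∈ H ∧ ldR x a ∈ H := by
  refine ⟨{ carrier := {x : R | ldL ldE x = 0}
            add_mem' := ?_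
            zero_mem' := ?_
            neg_mem' := ?_ }, rfl, ?_⟩
  · intro a b ha hb
    simp only [Set.mem_setOf_eq] at *
    rw [dist1, ha, hb, add_zero]
  · simp only [Set.mem_setOf_eq, ldL_zero_right]
  · intro a ha
    simp only [Set.mem_setOf_eq] at *
    have h := dist1 ldE a (-a)
    rw [add_neg_cancel, ldL_zero_right, ha, zero_add] at h
    exact h.symm
  · intro a ha x
    change ldL ldE a = 0 at ha
    change ldL ldE (ldL a x) = 0 ∧ ldL ldE (ldR a x) = 0 ∧ ldL ldE (ldL x a) = 0 ∧ ldL ldE (ldR x a) = 0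
    refine ⟨?_, ?_, ?_, ?_⟩
    · rw [ax1, ha, ldL_zero_left]
    · rw [← ax2, ha, ldL_zero_left]
    · rw [ax1, ldL_halo ha]
    · rw [← ax2, ldL_halo ha (ldL ldE x)]
end

section
/- In a left diring R with left multiplicative bar-unit e_ℓ, every element of the coset e_ℓ + ℏ⁺(R) is again a left bar-unit, i.e., e_ℓ + ℏ⁺(R) ⊆ ℏ×_ℓ(R), where ℏ×_ℓ(R) = {α ∈ R : α ↼· x = x for all x ∈ R}. -/
universe u v

open LeftDiring
/-- `ldE + ℏ⁺(R) ⊆ ℏ×ₗ(R)`: every element of the coset of the halo at a left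
bar-unit is again a left bar-unit. -/
theorem stmt5 {R : Type u} [LeftDiring R] :
    ∀ h : R, ldL ldE h = 0 → ∀ x : R, ldR (ldE + h) x = x := by
  intro h hh x
  have h0 : ldR (0 : R) x = 0 := by
    have := dist4 (0 : R) (0 : R) x
    simpa using this
  have hhx : ldR h x = 0 := by
    have := ax4 (ldE : R) h x
    rw [hh, ax6] at this
    rw [← this, h0]
  rw [dist4, ax6, hhx, add_zero]
end

section
/- Let R be a left diring with a two-sided multiplicative bar-unit e (i.e., e ↼· x = x = x ⇀· e for all x). Then e + ℏ⁺(R) = ℏ×(R), where ℏ×(R) = {α ∈ R : α ↼· x = x = x ⇀· α for all x ∈ R} is the multiplicative halo. -/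
universe u v

open LeftDiring
/-- If `ldE` is a two-sided bar-unit, then `ldE + ℏ⁺(R) = ℏ×(R)`. -/
theorem stmt6 {R : Type u} [LeftDiring R] (he : ∀ x : R, ldL x ldE = x) :
    (fun h : R => ldE + h) '' {x : R | ldL ldE x = 0} =
      {α : R | ∀ x : R, ldR α x = x ∧ ldL x α = x} := by

  have hL0 : ∀ x : R, ldL x (0 : R) = 0 := by
    intro x
    have := dist1 x (0:R) 0
    simpa using this
  have hR0 : ∀ x : R, ldR (0 : R) x = 0 := by
    intro x
    have := dist4 (0:R) 0 x
    simpa using this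
  ext α
  constructor
  · rintro ⟨h, hh, rfl⟩
    intro x
    constructor
    · have h1 : ldR h x = 0 := by
        have := ax4 (R := R) ldE h x
        rw [hh, hR0, ax6] at this
        exact this.symm
      rw [dist4, ax6, h1, add_zero]
    · have h2 : ldL x h = 0 := by
        have := ax1 (R := R) x ldE h
        rw [hh, hL0, he] at this
        exact this.symm
      rw [dist1, he, h2, add_zero]
  · intro hα
    refine ⟨α - ldE, ?_, by simp⟩
    have h1 : ldL ldE α = ldE := (hα ldE).2
    have h2 : ldL ldE ldE = ldE := he ldE
    have : ldL ldE (α - ldE) = ldL ldE α - ldL ldE ldE := by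
      have h3 := dist1 (R := R) ldE (α - ldE) ldE
      rw [sub_add_cancel] at h3
      exact eq_sub_of_add_eq h3.symm
    simp [this, h1, h2]
end

section
/- Let R be a diring with bar-unit e. Define the Liu product x • y := x ↼· y + x ⇀· y − (x ↼· e) ⇀· y. Then • is associative, and e is a two-sided identity for •; hence (R, +, •) is a ring with identity e. -/
universe u v

open LeftDiring
/-- The Liu product `x • y := x ↼· y + x ⇀· y − (x ↼· e) ⇀· y`. -/
def liu {R : Type u} [LeftDiring R] (x y : R) : R :=
  ldR x y + ldL x y - ldL (ldR x ldE) y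

section helpers
variable {R : Type u} [LeftDiring R]

lemma ldL_sub (x a b : R) : ldL x (a - b) = ldL x a - ldL x b := by
  have h := dist1 x (a - b) b; rw [sub_add_cancel] at h
  exact eq_sub_of_add_eq h.symm
lemma sub_ldL (a b z : R) : ldL (a - b) z = ldL a z - ldL b z := by
  have h := dist2 (a - b) b z; rw [sub_add_cancel] at h
  exact eq_sub_of_add_eq h.symm
lemma ldR_sub (x a b : R) : ldR x (a - b) = ldR x a - ldR x b := by
  have h := dist3 x (a - b) b; rw [sub_add_cancel] at h
  exact eq_sub_of_add_eq h.symm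
lemma sub_ldR (a b z : R) : ldR (a - b) z = ldR a z - ldR b z := by
  have h := dist4 (a - b) b z; rw [sub_add_cancel] at h
  exact eq_sub_of_add_eq h.symm

lemma LL (x y z : R) : ldL x (ldL y z) = ldL x (ldR y z) := by
  rw [ax1, ax2]
lemma RR' (x y z : R) : ldR (ldR x y) z = ldR x (ldR y z) := (ax5 x y z).symm

lemma lemC (he : ∀ x : R, ldL x ldE = x) (a y z : R) :
    ldL a (ldR y (ldL ldE z)) = ldL a (ldR y z) := by
  rw [← ax3, ax1, ← ax2 a y ldE, he, ax2]

end helpers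

/-- In a diring with (two-sided) bar-unit `ldE`, the Liu product is associative,
`ldE` is a two-sided identity for it, and it distributes over `+`;
hence `(R, +, •)` is a ring with identity `ldE`. -/
theorem stmt8 {R : Type u} [LeftDiring R] (he : ∀ x : R, ldL x ldE = x) :
    (∀ x y z : R, liu (liu x y) z = liu x (liu y z)) ∧
    (∀ x : R, liu ldE x = x) ∧ (∀ x : R, liu x ldE = x) ∧
    (∀ x y z : R, liu x (y + z) = liu x y + liu x z) ∧
    (∀ x y z : R, liu (x + y) z = liu x z + liu y z) := by
  refine ⟨?_, ?_, ?_, ?_, ?_⟩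
  · intro x y z
    simp only [liu, dist1, dist2, dist3, dist4, ldL_sub, sub_ldL, ldR_sub, sub_ldR,
      LL, ax2, ax3, ax4, RR', ax6, he, lemC he]
    abel
  · intro x; simp [liu, ax6, he]
  · intro x; simp [liu, ax6, he]
  · intro x y z
    simp only [liu, dist1, dist3]; abel
  · intro x y z
    simp only [liu, dist2, dist4]; abel
end

section
/- Let R be a left diring with left bar-unit e and M a left R-module. Then M decomposes as an internal direct sum of abelian groups: M = (e ⇀⊙ M) ⊕ ℏ⁺(M). That is, every x ∈ M can be written uniquely as x = x₀ + x₁ with x₀ ∈ e ⇀⊙ M and e ⇀⊙ x₁ = 0. -/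
universe u v

open LeftDiring

/-- A left module over a left diring `R`: an abelian group `M` with two actions
`la` = ⇀⊙ and `ra` = ↼⊙ satisfying the module axioms. -/
structure DiModule (R : Type u) [LeftDiring R] (M : Type v) [AddCommGroup M] where
  la : R → M → M
  ra : R → M → M
  la_add : ∀ (a : R) (x y : M), la a (x + y) = la a x + la a y
  add_la : ∀ (a b : R) (x : M), la (a + b) x = la a x + la b x
  ra_add : ∀ (a : R) (x y : M), ra a (x + y) = ra a x + ra a y
  add_ra : ∀ (a b : R) (x : M), ra (a + b) x = ra a x + ra b x
  m1 : ∀ (a b : R) (x : M), la (ldL a b) x = la a (la b x)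
  m2 : ∀ (a b : R) (x : M), la (ldL a b) x = la a (ra b x)
  m3 : ∀ (a b : R) (x : M), la (ldR a b) x = ra a (la b x)
  m4 : ∀ (a b : R) (x : M), ra (ldL a b) x = ra a (ra b x)
  m5 : ∀ (a b : R) (x : M), ra (ldR a b) x = ra a (ra b x)
  m6 : ∀ x : M, ra ldE x = x
/-- `M = (e ⇀⊙ M) ⊕ ℏ⁺(M)`: every `x ∈ M` is uniquely `x₀ + x₁` with
`x₀ ∈ e ⇀⊙ M` and `x₁ ∈ ℏ⁺(M)`. -/
theorem stmt11 {R : Type u} [LeftDiring R] {M : Type v} [AddCommGroup M]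
    (mm : DiModule R M) :
    ∀ x : M, ∃! p : M × M,
      p.1 ∈ Set.range (mm.la ldE) ∧ mm.la ldE p.2 = 0 ∧ x = p.1 + p.2 := by
  intro x
  set f : M →+ M := AddMonoidHom.mk' (mm.la ldE) (mm.la_add ldE) with hf
  have hfx : ∀ y, f y = mm.la ldE y := fun _ => rfl
  have hidem : ∀ y : M, mm.la ldE (mm.la ldE y) = mm.la ldE y := by
    intro y
    rw [← mm.m1, mm.m2, mm.m6]
  refine ⟨(mm.la ldE x, x - mm.la ldE x), ⟨⟨x, rfl⟩, ?_, by rw [← add_sub_assoc, add_sub_cancel_left]⟩, ?_⟩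
  · have : f (x - mm.la ldE x) = f x - f (mm.la ldE x) := map_sub f _ _
    simpa [hfx, hidem] using this
  · rintro ⟨p1, p2⟩ ⟨⟨y, hy⟩, h2, h3⟩
    simp only at hy h2 h3
    have hp1 : mm.la ldE p1 = p1 := by rw [← hy, hidem]
    have hx : mm.la ldE x = p1 := by
      have : f x = f p1 + f p2 := by rw [h3, map_add]
      simpa [hfx, hp1, h2] using this
    have hp2 : p2 = x - mm.la ldE x := by rw [hx]; rw [h3]; abel
    simp [Prod.ext_iff, hx, hp2]
end

section
/- Schur's Lemma for 3-irreducible modules: Let R be a left diring with left bar-unit e, and let M, N be 3-irreducible left R-modules (and assume e ⇀⊙ M ≠ 0 and e ⇀⊙ N ≠ 0). Then every nonzero R-module homomorphism f : M → N is an R-isomorphism. In particular End_R(M) is a division ring. -/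
universe u v

open LeftDiring

/-- A submodule: an additive subgroup closed under both actions. -/
def IsSubmodule {R : Type u} [LeftDiring R] {M : Type v} [AddCommGroup M]
    (mm : DiModule R M) (N : AddSubgroup M) : Prop :=
  ∀ a : R, ∀ x ∈ N, mm.la a x ∈ N ∧ mm.ra a x ∈ N

/-- The additive halo of a module. -/
def halo {R : Type u} [LeftDiring R] {M : Type v} [AddCommGroup M]
    (mm : DiModule R M) : Set M :=
  {x : M | mm.la ldE x = 0}

/-- `M` is 3-irreducible: the additive halo is the unique proper submodule
strictly between `0` and `M` (in particular `0 ≠ ℏ⁺(M) ≠ M`). -/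
def Irr3 {R : Type u} [LeftDiring R] {M : Type v} [AddCommGroup M]
    (mm : DiModule R M) : Prop :=
  halo mm ≠ {0} ∧ halo mm ≠ Set.univ ∧
  ∀ N : AddSubgroup M, IsSubmodule mm N →
    (N : Set M) ≠ {0} → (N : Set M) ≠ Set.univ → (N : Set M) = halo mm

/-- An `R`-module homomorphism. -/
def IsModuleHom {R : Type u} [LeftDiring R] {M : Type v} {N : Type v}
    [AddCommGroup M] [AddCommGroup N]
    (mmM : DiModule R M) (mmN : DiModule R N) (f : M → N) : Prop :=
  (∀ x y : M, f (x + y) = f x + f y) ∧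
  (∀ (a : R) (x : M), f (mmM.la a x) = mmN.la a (f x)) ∧
  (∀ (a : R) (x : M), f (mmM.ra a x) = mmN.ra a (f x))

lemma la_zero' {R : Type u} [LeftDiring R] {M : Type v} [AddCommGroup M]
    (mm : DiModule R M) (a : R) : mm.la a 0 = 0 := by
  have h := mm.la_add a 0 0
  rw [add_zero] at h
  exact (left_eq_add.mp h)

lemma la_idem' {R : Type u} [LeftDiring R] {M : Type v} [AddCommGroup M]
    (mm : DiModule R M) (x : M) : mm.la ldE (mm.la ldE x) = mm.la ldE x := by
  have h1 := mm.m1 (ldE : R) ldE x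
  have h2 := mm.m2 (ldE : R) ldE x
  rw [mm.m6 x] at h2
  rw [← h1, h2]

/-- Schur bijectivity core. -/
lemma schur_bij' {R : Type u} [LeftDiring R] {M N : Type v}
    [AddCommGroup M] [AddCommGroup N]
    (mmM : DiModule R M) (mmN : DiModule R N)
    (hM : Irr3 mmM) (hN : Irr3 mmN)
    (hM' : ∃ x : M, mmM.la ldE x ≠ 0)
    (f : M → N) (hf : IsModuleHom mmM mmN f) (hne : ∃ x, f x ≠ 0) :
    Function.Bijective f := by
  obtain ⟨hadd, hla, hra⟩ := hf
  set φ : M →+ N := AddMonoidHom.mk' f hadd with hφ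
  have hφf : ∀ x, φ x = f x := fun _ => rfl
  have hraz : mmN.ra ldE (0 : N) = 0 := by
    have h := mmN.ra_add (ldE : R) 0 0
    rw [add_zero] at h
    exact (left_eq_add.mp h)
  have hraz' : ∀ a : R, mmN.ra a (0 : N) = 0 := by
    intro a
    have h := mmN.ra_add a 0 0
    rw [add_zero] at h
    exact (left_eq_add.mp h)
  -- kernel is a submodule
  have hker : IsSubmodule mmM φ.ker := by
    intro a x hx
    have hx0 : f x = 0 := hx
    constructor
    · show f (mmM.la a x) = 0
      rw [hla, hx0, la_zero']
    · show f (mmM.ra a x) = 0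
      rw [hra, hx0, hraz']
  -- range is a submodule
  have hrange : IsSubmodule mmN φ.range := by
    intro a y hy
    obtain ⟨x, hx⟩ := hy
    rw [hφf] at hx
    constructor
    · exact ⟨mmM.la a x, by rw [hφf, hla, hx]⟩
    · exact ⟨mmM.ra a x, by rw [hφf, hra, hx]⟩
  have hkeru : (φ.ker : Set M) ≠ Set.univ := by
    intro h
    obtain ⟨x, hx⟩ := hne
    have hx' : x ∈ (φ.ker : Set M) := by rw [h]; trivial
    exact hx hx'
  have hrng0 : (φ.range : Set N) ≠ {0} := by
    intro h
    obtain ⟨x, hx⟩ := hne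
    have hmem : f x ∈ (φ.range : Set N) := ⟨x, rfl⟩
    rw [h] at hmem
    exact hx hmem
  -- kernel cannot be the halo
  have hker_ne_halo : (φ.ker : Set M) ≠ halo mmM := by
    intro hkh
    have hkh' : ∀ x : M, f x = 0 ↔ mmM.la ldE x = 0 := by
      intro x
      constructor
      · intro h0
        have : x ∈ (φ.ker : Set M) := h0
        rw [hkh] at this
        exact this
      · intro h0
        have : x ∈ halo mmM := h0
        rw [← hkh] at this
        exact this
    -- key: f (la e x) = 0 implies la e x = 0
    have hkey : ∀ x : M, f (mmM.la ldE x) = 0 → mmM.la ldE x = 0 := by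
      intro x h0
      have := (hkh' (mmM.la ldE x)).mp h0
      rw [la_idem'] at this
      exact this
    -- range cases
    by_cases hr : (φ.range : Set N) = Set.univ
    · -- then halo N = {0}, contradiction
      apply hN.1
      ext y
      simp only [Set.mem_singleton_iff]
      constructor
      · intro hy
        have hy' : y ∈ (φ.range : Set N) := by rw [hr]; trivial
        obtain ⟨x, hx⟩ := hy'
        rw [hφf] at hx
        have h0 : f (mmM.la ldE x) = 0 := by
          rw [hla, hx]
          exact hy
        have h1 : mmM.la ldE x = 0 := hkey x h0
        have h2 : f x = 0 := (hkh' x).mpr h1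
        rw [← hx, h2]
      · intro hy
        rw [hy]
        show mmN.la ldE (0:N) = 0
        exact la_zero' mmN ldE
    · have hr' : (φ.range : Set N) = halo mmN := hN.2.2 φ.range hrange hrng0 hr
      obtain ⟨x, hx⟩ := hM'
      apply hx
      have hmem : f x ∈ (φ.range : Set N) := ⟨x, rfl⟩
      rw [hr'] at hmem
      have h0 : f (mmM.la ldE x) = 0 := by rw [hla]; exact hmem
      exact hkey x h0
  -- hence ker = {0}
  have hk0 : (φ.ker : Set M) = {0} := by
    by_contra h
    exact hker_ne_halo (hM.2.2 φ.ker hker h hkeru)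
  have hinj : Function.Injective f := by
    intro x y hxy
    have h0 : φ (x - y) = 0 := by
      rw [map_sub, hφf, hφf, hxy, sub_self]
    have : x - y ∈ (φ.ker : Set M) := h0
    rw [hk0] at this
    exact sub_eq_zero.mp this
  -- range cannot be the halo either
  have hr : (φ.range : Set N) = Set.univ := by
    by_contra h
    have hr' : (φ.range : Set N) = halo mmN := hN.2.2 φ.range hrange hrng0 h
    apply hM.2.1
    ext x
    simp only [Set.mem_univ, iff_true]
    have hmem : f x ∈ (φ.range : Set N) := ⟨x, rfl⟩
    rw [hr'] at hmem
    have h0 : f (mmM.la ldE x) = 0 := by rw [hla]; exact hmem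
    show mmM.la ldE x = 0
    apply hinj
    rw [h0, ← hφf, map_zero]
  refine ⟨hinj, ?_⟩
  intro y
  have : y ∈ (φ.range : Set N) := by rw [hr]; trivial
  obtain ⟨x, hx⟩ := this
  exact ⟨x, hx⟩

/-- Schur's Lemma for 3-irreducible modules: every nonzero homomorphism between
3-irreducible modules (with `e ⇀⊙ M ≠ 0 ≠ e ⇀⊙ N`) is an isomorphism; in
particular every nonzero endomorphism of `M` is invertible, so `End_R M` is a
division ring. -/
theorem stmt15 {R : Type u} [LeftDiring R] {M N : Type v}
    [AddCommGroup M] [AddCommGroup N]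
    (mmM : DiModule R M) (mmN : DiModule R N)
    (hM : Irr3 mmM) (hN : Irr3 mmN)
    (hM' : ∃ x : M, mmM.la ldE x ≠ 0) (hN' : ∃ y : N, mmN.la ldE y ≠ 0) :
    (∀ f : M → N, IsModuleHom mmM mmN f → (∃ x, f x ≠ 0) → Function.Bijective f) ∧
    (∀ g : M → M, IsModuleHom mmM mmM g → (∃ x, g x ≠ 0) →
      ∃ h : M → M, IsModuleHom mmM mmM h ∧
        (∀ x, g (h x) = x) ∧ (∀ x, h (g x) = x)) := by
  constructor
  · intro f hf hne
    exact schur_bij' mmM mmN hM hN hM' f hf hne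
  · intro g hg hne
    have hbij := schur_bij' mmM mmM hM hM hM' g hg hne
    obtain ⟨hadd, hla, hra⟩ := hg
    let E := Equiv.ofBijective g hbij
    refine ⟨E.symm, ⟨?_, ?_, ?_⟩, ?_, ?_⟩
    · intro x y
      apply hbij.1
      show g (E.symm (x + y)) = g (E.symm x + E.symm y)
      rw [hadd]
      have h1 : g (E.symm x) = x := E.apply_symm_apply x
      have h2 : g (E.symm y) = y := E.apply_symm_apply y
      have h3 : g (E.symm (x + y)) = x + y := E.apply_symm_apply (x + y)
      rw [h1, h2, h3]
    · intro a x
      apply hbij.1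
      show g (E.symm (mmM.la a x)) = g (mmM.la a (E.symm x))
      rw [hla]
      have h1 : g (E.symm x) = x := E.apply_symm_apply x
      have h2 : g (E.symm (mmM.la a x)) = mmM.la a x := E.apply_symm_apply _
      rw [h1, h2]
    · intro a x
      apply hbij.1
      show g (E.symm (mmM.ra a x)) = g (mmM.ra a (E.symm x))
      rw [hra]
      have h1 : g (E.symm x) = x := E.apply_symm_apply x
      have h2 : g (E.symm (mmM.ra a x)) = mmM.ra a x := E.apply_symm_apply _
      rw [h1, h2]
    · intro x
      exact E.apply_symm_apply x
    · intro x
      exact E.symm_apply_apply x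
end

section
/- Let I be a left ideal of a left diring R and define (I : R) := {a ∈ R : a ⇀· R ⊆ I and a ↼· R ⊆ I}. Then (I : R) is an ideal of R, and it is the largest ideal of R contained in I whenever R has a two-sided bar-unit; in general, every ideal K of R with K ⊆ I satisfies K ⊆ (I : R). -/
universe u v

open LeftDiring
/-- An ideal of a left diring: an additive subgroup closed under multiplication
by `R` on both sides for both products. -/
def IsIdeal {R : Type u} [LeftDiring R] (K : AddSubgroup R) : Prop :=
  ∀ a ∈ K, ∀ r : R, ldL a r ∈ K ∧ ldR a r ∈ K ∧ ldL r a ∈ K ∧ ldR r a ∈ K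


def colonSub {R : Type u} [LeftDiring R] (I : AddSubgroup R) : AddSubgroup R where
  carrier := {a : R | ∀ r : R, ldL a r ∈ I ∧ ldR a r ∈ I}
  add_mem' := by
    intro a b ha hb r
    rw [Set.mem_setOf_eq] at ha hb
    constructor
    · rw [dist2]; exact I.add_mem (ha r).1 (hb r).1
    · rw [dist4]; exact I.add_mem (ha r).2 (hb r).2
  zero_mem' := by
    intro r
    constructor
    · have h := dist2 (0:R) 0 r
      rw [add_zero] at h
      rw [add_eq_left.mp h.symm]; exact I.zero_mem
    · have h := dist4 (0:R) 0 r
      rw [add_zero] at h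
      rw [add_eq_left.mp h.symm]; exact I.zero_mem
  neg_mem' := by
    intro a ha r
    rw [Set.mem_setOf_eq] at ha
    constructor
    · have h := dist2 (-a) a r
      have h0 : ldL (0:R) r = 0 := by
        have h2 := dist2 (0:R) 0 r
        rw [add_zero] at h2
        exact add_eq_left.mp h2.symm
      rw [neg_add_cancel, h0] at h
      rw [eq_neg_of_add_eq_zero_left h.symm]
      exact I.neg_mem (ha r).1
    · have h := dist4 (-a) a r
      have h0 : ldR (0:R) r = 0 := by
        have h2 := dist4 (0:R) 0 r
        rw [add_zero] at h2
        exact add_eq_left.mp h2.symm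
      rw [neg_add_cancel, h0] at h
      rw [eq_neg_of_add_eq_zero_left h.symm]
      exact I.neg_mem (ha r).2

/-- For a left ideal `I`, `(I : R) = {a | a ⇀· R ⊆ I ∧ a ↼· R ⊆ I}` is an ideal,
contains every ideal contained in `I`, and is contained in `I` when `R` has a
two-sided bar-unit; hence it is then the largest ideal of `R` contained in `I`. -/
theorem stmt17 {R : Type u} [LeftDiring R] (I : AddSubgroup R)
    (hI : ∀ r : R, ∀ x ∈ I, ldL r x ∈ I ∧ ldR r x ∈ I) :
    (∃ J : AddSubgroup R,
      (J : Set R) = {a : R | ∀ r : R, ldL a r ∈ I ∧ ldR a r ∈ I} ∧ IsIdeal J) ∧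
    (∀ K : AddSubgroup R, IsIdeal K → (K : Set R) ⊆ (I : Set R) →
      (K : Set R) ⊆ {a : R | ∀ r : R, ldL a r ∈ I ∧ ldR a r ∈ I}) ∧
    ((∀ x : R, ldL x ldE = x) →
      {a : R | ∀ r : R, ldL a r ∈ I ∧ ldR a r ∈ I} ⊆ (I : Set R)) := by
  refine ⟨⟨colonSub I, rfl, ?_⟩, ?_, ?_⟩
  · intro a ha r
    refine ⟨fun s => ⟨?_, ?_⟩, fun s => ⟨?_, ?_⟩, fun s => ⟨?_, ?_⟩, fun s => ⟨?_, ?_⟩⟩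
    · rw [ax2]; exact (ha _).1
    · rw [ax4]; exact (ha _).2
    · rw [ax3]; exact (ha _).2
    · rw [← ax5]; exact (ha _).2
    · rw [← ax1]; exact (hI r _ (ha s).1).1
    · rw [ax4]; exact (hI r _ (ha s).2).2
    · rw [ax3]; exact (hI r _ (ha s).1).2
    · rw [← ax5]; exact (hI r _ (ha s).2).2
  · intro K hK hKI a haK r
    exact ⟨hKI (hK a haK r).1, hKI (hK a haK r).2.1⟩
  · intro hE a ha
    have := (ha ldE).1
    rwa [hE a] at this
end
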